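/- arXiv:1901.08686 — 3 statements merged into one kernel-verified Lean document; each statement's English description precedes it below -/
import Mathlib

section
/- Let x ∈ ℝ₊^m with all x_l > 0, let w ∈ ℝ₊^m with Σ_{l=1}^m w_l = 1, and set x̄ := Σ_{l=1}^m w_l x_l > 0. Then x̄ - ∏_{l=1}^m x_l^{w_l} ≥ (4/11) Σ_{l=1}^m w_l (max{x̄ - x_l, 0})² / x̄. -/
/-!
Normalise by `x̄`: with `t_l = x_l / x̄` we have `∑ w_l t_l = 1`, and the claim becomes
`∏ t_l ^ w_l ≤ 1 - (4/11) S` for `S = ∑ w_l (1 - t_l)₊²`, which lies in `[0, 1]`.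
Keeping the quadratic term of `-log (1 - u) = u + u²/2 + …` sharpens `log t ≤ t - 1` to
`log t ≤ t - 1 - (1 - t)₊²/2`; averaging gives `∏ t_l ^ w_l ≤ exp (-S/2)`.
Finally `exp (-S/2)` lies below the chord of `exp` over `[-1/2, 0]`, and `e^{-1/2} ≤ 7/11`.
-/

open Real Finset

theorem Real.add_sq_div_two_le_neg_log_one_sub {u : ℝ} (h0 : 0 ≤ u) (h1 : u < 1) :
    u + u ^ 2 / 2 ≤ -log (1 - u) := by
  have := sum_le_hasSum (range 2) (fun n _ => by positivity)
    (hasSum_pow_div_log_of_abs_lt_one (by rwa [abs_of_nonneg h0]))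
  norm_num [sum_range_succ] at this
  linarith

theorem Real.log_le_sub_one_sub_sq_posPart {t : ℝ} (ht : 0 < t) :
    log t ≤ t - 1 - max (1 - t) 0 ^ 2 / 2 := by
  rcases le_or_gt 1 t with h | h
  · rw [max_eq_right (by linarith)]
    linarith [log_le_sub_one_of_pos ht]
  · rw [max_eq_left (by linarith)]
    have := add_sq_div_two_le_neg_log_one_sub (u := 1 - t) (by linarith) (by linarith)
    rw [sub_sub_cancel] at this
    linarith

theorem Real.exp_neg_half_le : exp (-(1 / 2)) ≤ 7 / 11 := by
  have hsq : exp (-(1 / 2)) * exp (-(1 / 2)) * exp 1 = 1 := by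
    rw [← exp_add, ← exp_add]; norm_num
  nlinarith [exp_one_gt_d9, exp_pos (-(1 / 2))]

theorem Real.exp_neg_half_mul_le {s : ℝ} (h0 : 0 ≤ s) (h1 : s ≤ 1) :
    exp (-(s / 2)) ≤ 1 - 4 / 11 * s := by
  have := convexOn_exp.2 (Set.mem_univ (-(1 / 2))) (Set.mem_univ 0) h0 (sub_nonneg.2 h1)
    (add_sub_cancel s 1)
  simp only [smul_eq_mul, mul_zero, add_zero, exp_zero, mul_one] at this
  rw [show s * -(1 / 2) = -(s / 2) by ring] at this
  nlinarith [exp_neg_half_le]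

section Weighted

variable {ι : Type*} (s : Finset ι) {w t : ι → ℝ}

theorem Real.prod_rpow_eq_exp_sum_mul_log (ht : ∀ i ∈ s, 0 < t i) :
    ∏ i ∈ s, t i ^ w i = exp (∑ i ∈ s, w i * log (t i)) := by
  rw [exp_sum]
  exact prod_congr rfl fun i hi => by rw [rpow_def_of_pos (ht i hi), mul_comm]

theorem Real.sum_mul_sq_posPart_one_sub_le (hw : ∀ i ∈ s, 0 ≤ w i) (ht : ∀ i ∈ s, 0 ≤ t i) :
    ∑ i ∈ s, w i * max (1 - t i) 0 ^ 2 ≤ ∑ i ∈ s, w i := by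
  refine sum_le_sum fun i hi => mul_le_of_le_one_right (hw i hi) ?_
  have := ht i hi
  exact pow_le_one₀ (le_max_right _ _) (max_le (by linarith) zero_le_one)

theorem Real.sum_mul_log_le_neg_half_sum_sq (hw : ∀ i ∈ s, 0 ≤ w i) (ht : ∀ i ∈ s, 0 < t i)
    (hw1 : ∑ i ∈ s, w i = 1) (hwt : ∑ i ∈ s, w i * t i = 1) :
    ∑ i ∈ s, w i * log (t i) ≤ -((∑ i ∈ s, w i * max (1 - t i) 0 ^ 2) / 2) := by
  calc ∑ i ∈ s, w i * log (t i)
      ≤ ∑ i ∈ s, w i * (t i - 1 - max (1 - t i) 0 ^ 2 / 2) :=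
        sum_le_sum fun i hi =>
          mul_le_mul_of_nonneg_left (log_le_sub_one_sub_sq_posPart (ht i hi)) (hw i hi)
    _ = ∑ i ∈ s, w i * t i - ∑ i ∈ s, w i - (∑ i ∈ s, w i * max (1 - t i) 0 ^ 2) / 2 := by
        rw [sum_div, ← sum_sub_distrib, ← sum_sub_distrib]
        exact sum_congr rfl fun i _ => by ring
    _ = _ := by rw [hw1, hwt]; ring

theorem Real.prod_rpow_le_one_sub_sum_sq_posPart (hw : ∀ i ∈ s, 0 ≤ w i)
    (ht : ∀ i ∈ s, 0 < t i) (hw1 : ∑ i ∈ s, w i = 1) (hwt : ∑ i ∈ s, w i * t i = 1) :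
    ∏ i ∈ s, t i ^ w i ≤ 1 - 4 / 11 * ∑ i ∈ s, w i * max (1 - t i) 0 ^ 2 := by
  have hS : ∑ i ∈ s, w i * max (1 - t i) 0 ^ 2 ≤ 1 :=
    (sum_mul_sq_posPart_one_sub_le s hw fun i hi => (ht i hi).le).trans hw1.le
  calc ∏ i ∈ s, t i ^ w i = exp (∑ i ∈ s, w i * log (t i)) := prod_rpow_eq_exp_sum_mul_log s ht
    _ ≤ exp (-((∑ i ∈ s, w i * max (1 - t i) 0 ^ 2) / 2)) :=
        exp_le_exp.2 (sum_mul_log_le_neg_half_sum_sq s hw ht hw1 hwt)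
    _ ≤ _ := exp_neg_half_mul_le (sum_nonneg fun i hi => mul_nonneg (hw i hi) (sq_nonneg _)) hS

end Weighted

theorem stmt_1 (m : ℕ) (x w : Fin m → ℝ)
    (hx : ∀ l, 0 < x l) (hw : ∀ l, 0 ≤ w l) (hw1 : ∑ l, w l = 1)
    (xbar : ℝ) (hxbar : xbar = ∑ l, w l * x l) (hpos : 0 < xbar) :
    xbar - ∏ l, (x l) ^ (w l) ≥
      (4/11) * ∑ l, w l * (max (xbar - x l) 0) ^ 2 / xbar := by
  set t : Fin m → ℝ := fun l => x l / xbar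
  have ht : ∀ l, 0 < t l := fun l => div_pos (hx l) hpos
  have hxt : ∀ l, x l = xbar * t l := fun l => (mul_div_cancel₀ _ hpos.ne').symm
  have hwt : ∑ l, w l * t l = 1 := by
    simp only [t, mul_div_assoc', ← sum_div, ← hxbar, div_self hpos.ne']
  have hprod : ∏ l, x l ^ w l = xbar * ∏ l, t l ^ w l := by
    simp only [hxt, mul_rpow hpos.le (ht _).le, prod_mul_distrib, ← rpow_sum_of_pos hpos, hw1,
      rpow_one]
  have hrhs : ∑ l, w l * max (xbar - x l) 0 ^ 2 / xbar
      = xbar * ∑ l, w l * max (1 - t l) 0 ^ 2 := by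
    rw [mul_sum]
    refine sum_congr rfl fun l _ => ?_
    have hmax : max (xbar - x l) 0 = xbar * max (1 - t l) 0 := by
      rw [mul_max_of_nonneg _ _ hpos.le, mul_zero, mul_one_sub, ← hxt]
    rw [hmax]
    field_simp
  have key := prod_rpow_le_one_sub_sum_sq_posPart univ (fun l _ => hw l)
    (fun l _ => ht l) hw1 hwt
  rw [hprod, hrhs, ge_iff_le]
  nlinarith [mul_le_mul_of_nonneg_left key hpos.le]
end

section
/- Let w ∈ ℝ₊^m with Σ_l w_l = 1 and let q_1, …, q_m ∈ ℝ₊^n each satisfy ⟨q_l, 𝟙⟩ = 1 (probability vectors). Define q̄ := Σ_l w_l q_l and q' ∈ ℝ₊^n by q'_j := exp(Σ_l w_l ln (q_l)_j) (entrywise weighted geometric mean, assuming all (q_l)_j > 0). Then ⟨q̄ - q', 𝟙⟩ ≥ (1/11) Σ_l w_l ‖q_l - q̄‖₁². -/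
/-!
For each coordinate, write `x_l = (q_l)_j` and `x̄ = q̄_j`. The refinement
`log u ≤ u - 1 - ((u - 1)⁻)² / 2` of `log u ≤ u - 1`, applied to `u = x_l / x̄` and averaged
with the weights `w`, gives `∑ w_l log x_l ≤ log x̄ - S / 2` with
`S = ∑ w_l ((x_l - x̄)⁻ / x̄)² ≤ 1`. On `[0, 1]` convexity gives
`exp (-S / 2) ≤ 1 - (4/11) S`, because `exp (-1/2) ≤ 7/11`; hence the arithmetic–geometric
gap `x̄ - exp (∑ w_l log x_l)` is at least `(4/11) ∑ w_l ((x_l - x̄)⁻)² / x̄`.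

Summing over the coordinates, it remains to bound `∑_j ((q_l - q̄)_j⁻)² / q̄_j` below by
`‖q_l - q̄‖₁² / 4`: as `q_l` and `q̄` have the same total mass, the negative parts of `q_l - q̄`
carry half of its `ℓ¹` norm, and Cauchy–Schwarz against the probability vector `q̄` does the rest.
-/

open Finset Real

namespace Real

theorem add_sq_div_two_le_neg_log_one_sub_s2 {t : ℝ} (h0 : 0 ≤ t) (h1 : t < 1) :
    t + t ^ 2 / 2 ≤ -log (1 - t) := by
  have hseries := hasSum_pow_div_log_of_abs_lt_one (abs_lt.2 ⟨by linarith, h1⟩)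
  have h := sum_le_hasSum (range 2) (fun n _ => by positivity) hseries
  norm_num [sum_range_succ] at h
  linarith

theorem log_sub_log_le_sub_div_sub_negPart_sq {a b : ℝ} (ha : 0 < a) (hb : 0 < b) :
    log a - log b ≤ (a - b) / b - ((a - b)⁻ / b) ^ 2 / 2 := by
  rw [← log_div ha.ne' hb.ne']
  rcases le_or_gt a b with hab | hab
  · have hneg : (a - b)⁻ = b - a := (negPart_eq_neg.2 (by linarith)).trans (neg_sub a b)
    have h := add_sq_div_two_le_neg_log_one_sub_s2 (t := (b - a) / b) (by positivity)
      ((div_lt_one hb).2 (by linarith))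
    have hsub : 1 - (b - a) / b = a / b := by field_simp; ring
    rw [hsub] at h
    rw [hneg, show (a - b) / b = -((b - a) / b) by ring]
    linarith
  · have h := log_le_sub_one_of_pos (div_pos ha hb)
    rw [negPart_eq_zero.2 (by linarith), zero_div, zero_pow two_ne_zero, zero_div, sub_zero]
    linarith [show a / b - 1 = (a - b) / b by field_simp]

theorem exp_neg_div_two_le {S : ℝ} (h0 : 0 ≤ S) (h1 : S ≤ 1) :
    exp (-(S / 2)) ≤ 1 - 4 / 11 * S := by
  have hconv := convexOn_exp.2 (Set.mem_univ 0) (Set.mem_univ (-(1 / 2))) (sub_nonneg.2 h1) h0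
    (by ring)
  simp only [smul_eq_mul, mul_zero, zero_add, exp_zero] at hconv
  have he : exp (-(1 / 2)) ≤ 7 / 11 := by
    have hsq : exp (1 / 2) ^ 2 = exp 1 := by rw [← exp_nat_mul]; norm_num
    have hlow : 11 / 7 ≤ exp (1 / 2) := by nlinarith [exp_pos (1 / 2), exp_one_gt_d9]
    rw [exp_neg, inv_le_comm₀ (exp_pos _) (by norm_num)]
    linarith
  rw [show S * (-(1 / 2)) = -(S / 2) by ring] at hconv
  nlinarith

end Real

section WeightedMean

variable {ι : Type*} {s : Finset ι} {w x : ι → ℝ}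

theorem Finset.sum_mul_pos_of_sum_eq_one (hw : ∀ i ∈ s, 0 ≤ w i) (hw1 : ∑ i ∈ s, w i = 1)
    (hx : ∀ i ∈ s, 0 < x i) : 0 < ∑ i ∈ s, w i * x i := by
  obtain ⟨i, hi, hwi⟩ := exists_ne_zero_of_sum_ne_zero (hw1.trans_ne one_ne_zero)
  exact sum_pos' (fun j hj => mul_nonneg (hw j hj) (hx j hj).le)
    ⟨i, hi, mul_pos ((hw i hi).lt_of_ne' hwi) (hx i hi)⟩

theorem Real.sum_mul_log_le_log_sum_mul_sub (hw : ∀ i ∈ s, 0 ≤ w i) (hw1 : ∑ i ∈ s, w i = 1)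
    (hx : ∀ i ∈ s, 0 < x i) :
    ∑ i ∈ s, w i * log (x i) ≤ log (∑ i ∈ s, w i * x i) -
      (∑ i ∈ s, w i * ((x i - ∑ k ∈ s, w k * x k)⁻ / ∑ k ∈ s, w k * x k) ^ 2) / 2 := by
  set m := ∑ k ∈ s, w k * x k with hm
  have hm_pos : 0 < m := sum_mul_pos_of_sum_eq_one hw hw1 hx
  have hdev : ∑ i ∈ s, w i * ((x i - m) / m) = 0 := by
    simp only [mul_div_assoc', ← sum_div, mul_sub, sum_sub_distrib, ← sum_mul, hw1, ← hm,
      one_mul, sub_self, zero_div]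
  calc ∑ i ∈ s, w i * log (x i)
      = log m + ∑ i ∈ s, w i * (log (x i) - log m) := by
        simp only [mul_sub, sum_sub_distrib, ← sum_mul, hw1, one_mul, add_sub_cancel]
    _ ≤ log m + ∑ i ∈ s, w i * ((x i - m) / m - ((x i - m)⁻ / m) ^ 2 / 2) := by
        refine add_le_add_right (sum_le_sum fun i hi => ?_) (log m)
        exact mul_le_mul_of_nonneg_left
          (log_sub_log_le_sub_div_sub_negPart_sq (hx i hi) hm_pos) (hw i hi)
    _ = _ := by
        simp only [mul_sub, sum_sub_distrib]
        rw [hdev]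
        simp only [← mul_div_assoc, ← sum_div]
        ring

theorem Real.sum_mul_negPart_div_sq_le_one (hw : ∀ i ∈ s, 0 ≤ w i) (hw1 : ∑ i ∈ s, w i = 1)
    (hx : ∀ i ∈ s, 0 < x i) :
    ∑ i ∈ s, w i * ((x i - ∑ k ∈ s, w k * x k)⁻ / ∑ k ∈ s, w k * x k) ^ 2 ≤ 1 := by
  set m := ∑ k ∈ s, w k * x k
  have hm_pos : 0 < m := sum_mul_pos_of_sum_eq_one hw hw1 hx
  calc _ ≤ ∑ i ∈ s, w i * 1 := by
        gcongr with i hi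
        · exact hw i hi
        · rw [sq_le_one_iff₀ (by positivity), div_le_one hm_pos, negPart_def]
          exact sup_le (by linarith [hx i hi]) hm_pos.le
    _ = 1 := by simp [hw1]

theorem Real.geom_mean_le_arith_mean_sub_sum_negPart_sq (hw : ∀ i ∈ s, 0 ≤ w i)
    (hw1 : ∑ i ∈ s, w i = 1) (hx : ∀ i ∈ s, 0 < x i) :
    exp (∑ i ∈ s, w i * log (x i)) ≤ ∑ i ∈ s, w i * x i -
      4 / 11 * ∑ i ∈ s, w i * ((x i - ∑ k ∈ s, w k * x k)⁻ ^ 2 / ∑ k ∈ s, w k * x k) := by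
  set m := ∑ k ∈ s, w k * x k
  have hm_pos : 0 < m := sum_mul_pos_of_sum_eq_one hw hw1 hx
  set S := ∑ i ∈ s, w i * ((x i - m)⁻ / m) ^ 2
  have hmS : m * S = ∑ i ∈ s, w i * ((x i - m)⁻ ^ 2 / m) := by
    rw [mul_sum]
    refine sum_congr rfl fun i _ => ?_
    field_simp
  have hS0 : 0 ≤ S := sum_nonneg fun i hi => mul_nonneg (hw i hi) (sq_nonneg _)
  calc exp (∑ i ∈ s, w i * log (x i))
      ≤ exp (log m - S / 2) := exp_le_exp.2 (sum_mul_log_le_log_sum_mul_sub hw hw1 hx)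
    _ = m * exp (-(S / 2)) := by rw [sub_eq_add_neg, exp_add, exp_log hm_pos]
    _ ≤ m * (1 - 4 / 11 * S) := by
        gcongr
        exact exp_neg_div_two_le hS0 (sum_mul_negPart_div_sq_le_one hw hw1 hx)
    _ = m - 4 / 11 * (m * S) := by ring
    _ = _ := by rw [hmS]

end WeightedMean

section SumAbs

variable {ι : Type*} {s : Finset ι}

theorem Finset.sum_abs_eq_two_mul_sum_negPart {a : ι → ℝ} (ha : ∑ i ∈ s, a i = 0) :
    ∑ i ∈ s, |a i| = 2 * ∑ i ∈ s, (a i)⁻ := by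
  have h : ∀ i ∈ s, |a i| = a i + 2 * (a i)⁻ := fun i _ => by
    linarith [posPart_add_negPart (a i), posPart_sub_negPart (a i)]
  rw [sum_congr rfl h, sum_add_distrib, ha, zero_add, mul_sum]

theorem Finset.sq_sum_abs_sub_div_le {p r : ι → ℝ} (hr : ∀ i ∈ s, 0 < r i)
    (hpr : ∑ i ∈ s, p i = ∑ i ∈ s, r i) :
    (∑ i ∈ s, |p i - r i|) ^ 2 / ∑ i ∈ s, r i ≤ 4 * ∑ i ∈ s, (p i - r i)⁻ ^ 2 / r i := by
  have h := sq_sum_div_le_sum_sq_div s (fun i => (p i - r i)⁻) hr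
  rw [sum_abs_eq_two_mul_sum_negPart (by rw [sum_sub_distrib, hpr, sub_self]), mul_pow,
    mul_div_assoc]
  linarith

end SumAbs

theorem stmt_2 (m n : ℕ) (w : Fin m → ℝ) (q : Fin m → Fin n → ℝ)
    (hw : ∀ l, 0 ≤ w l) (hw1 : ∑ l, w l = 1)
    (hq : ∀ l j, 0 < q l j) (hq1 : ∀ l, ∑ j, q l j = 1)
    (qbar q' : Fin n → ℝ)
    (hqbar : ∀ j, qbar j = ∑ l, w l * q l j)
    (hq' : ∀ j, q' j = Real.exp (∑ l, w l * Real.log (q l j))) :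
    ∑ j, (qbar j - q' j) ≥
      (1/11) * ∑ l, w l * (∑ j, |q l j - qbar j|) ^ 2 := by
  have hqbar_pos j : 0 < qbar j :=
    hqbar j ▸ sum_mul_pos_of_sum_eq_one (fun l _ => hw l) hw1 (fun l _ => hq l j)
  have hqbar_sum : ∑ j, qbar j = 1 := by
    simp only [hqbar]
    rw [sum_comm]
    simp only [← mul_sum, hq1, mul_one, hw1]
  have hgap j : 4 / 11 * ∑ l, w l * ((q l j - qbar j)⁻ ^ 2 / qbar j) ≤ qbar j - q' j := by
    have h := geom_mean_le_arith_mean_sub_sum_negPart_sq (fun l _ => hw l) hw1 (fun l _ => hq l j)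
    simp only [← hqbar, ← hq'] at h
    linarith
  have hl1 l : (∑ j, |q l j - qbar j|) ^ 2 ≤ 4 * ∑ j, (q l j - qbar j)⁻ ^ 2 / qbar j := by
    simpa only [hqbar_sum, div_one] using
      sq_sum_abs_sub_div_le (fun j _ => hqbar_pos j) ((hq1 l).trans hqbar_sum.symm)
  calc (1 / 11) * ∑ l, w l * (∑ j, |q l j - qbar j|) ^ 2
      ≤ (1 / 11) * ∑ l, w l * (4 * ∑ j, (q l j - qbar j)⁻ ^ 2 / qbar j) := by
        gcongr with l
        exacts [hw l, hl1 l]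
    _ = ∑ j, 4 / 11 * ∑ l, w l * ((q l j - qbar j)⁻ ^ 2 / qbar j) := by
        simp only [mul_sum]
        rw [sum_comm]
        exact sum_congr rfl fun j _ => sum_congr rfl fun l _ => by ring
    _ ≤ ∑ j, (qbar j - q' j) := sum_le_sum fun j _ => hgap j
end

section
/- Let u, v, u*, v* ∈ ℝ^{mn} (blocks u_l, v_l ∈ ℝ^n), B_l(u_l, v_l) := diag(e^{u_l}) K_l diag(e^{v_l}) with K_l ∈ ℝ₊^{n×n} positive, and f(u, v) := Σ_l w_l (⟨𝟙, B_l(u_l, v_l)𝟙⟩ - ⟨u_l, p_l⟩) with w ∈ S_m(1), p_l ∈ S_n(1). Suppose B_l(u_l, v_l)𝟙 = p_l for all l, all q_l := B_lᵀ(u_l, v_l)𝟙 satisfy ⟨q_l, 𝟙⟩ = 1, and the ranges of v_l and v*_l are each at most R_v. Then f(u, v) - f(u*, v*) ≤ R_v Σ_l w_l ‖q_l - q̄‖₁ where q̄ := Σ_l w_l q_l. -/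
/-!
The objective is jointly convex in `(u, v)`, so its excess over any other point is bounded by the
first-order term `⟨∇f(u, v), (u, v) - (u*, v*)⟩`. After an exact `u`-update the `u`-part of the
gradient `B_l 𝟙 - p_l` vanishes, leaving `Σ_l w_l ⟨v_l - v*_l, q_l⟩`. Since `Σ_l w_l (v_l - v*_l) = 0`
we may replace `q_l` by `q_l - q̄`, and since `q_l - q̄` sums to zero we may shift `v_l - v*_l` by the
midpoint of its range, which has half-width at most `R_v`; Hölder's inequality finishes.
-/

open Finset Real

/-- The contribution of one block to the dual objective, `⟨𝟙, diag(e^u) K diag(e^v) 𝟙⟩ - ⟨u, p⟩`. -/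
noncomputable def scalingObjective {ι κ : Type*} [Fintype ι] [Fintype κ]
    (K : Matrix ι κ ℝ) (p : ι → ℝ) (u : ι → ℝ) (v : κ → ℝ) : ℝ :=
  (∑ i, ∑ j, exp (u i) * K i j * exp (v j)) - ∑ i, u i * p i

lemma exp_sub_exp_le_exp_mul_sub (a b : ℝ) : exp a - exp b ≤ exp a * (a - b) := by
  have h := mul_le_mul_of_nonneg_left (add_one_le_exp (b - a)) (exp_pos a).le
  rw [← exp_add, add_sub_cancel] at h
  linarith

section Scaling

variable {ι κ : Type*} [Fintype ι] [Fintype κ]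

lemma sum_exp_mul_exp_sub_le (K : Matrix ι κ ℝ) (hK : ∀ i j, 0 ≤ K i j)
    (u u' : ι → ℝ) (v v' : κ → ℝ) :
    (∑ i, ∑ j, exp (u i) * K i j * exp (v j)) - ∑ i, ∑ j, exp (u' i) * K i j * exp (v' j) ≤
      ∑ i, ∑ j, exp (u i) * K i j * exp (v j) * ((u i - u' i) + (v j - v' j)) := by
  simp only [← sum_sub_distrib]
  refine sum_le_sum fun i _ => sum_le_sum fun j _ => ?_
  have h := mul_le_mul_of_nonneg_left
    (exp_sub_exp_le_exp_mul_sub (u i + v j) (u' i + v' j)) (hK i j)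
  simp only [exp_add] at h
  linarith

/-- The first-order bound at a point whose row marginals are `p`: only the `v`-gradient remains. -/
lemma scalingObjective_sub_le (K : Matrix ι κ ℝ) (hK : ∀ i j, 0 ≤ K i j) (p : ι → ℝ)
    (q : κ → ℝ) (u u' : ι → ℝ) (v v' : κ → ℝ)
    (hrow : ∀ i, ∑ j, exp (u i) * K i j * exp (v j) = p i)
    (hcol : ∀ j, ∑ i, exp (u i) * K i j * exp (v j) = q j) :
    scalingObjective K p u v - scalingObjective K p u' v' ≤ ∑ j, (v j - v' j) * q j := by
  have hgrad : ∑ i, ∑ j, exp (u i) * K i j * exp (v j) * ((u i - u' i) + (v j - v' j)) =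
      ∑ i, (u i - u' i) * p i + ∑ j, (v j - v' j) * q j := by
    simp only [mul_add, sum_add_distrib]
    congr 1
    · refine sum_congr rfl fun i _ => ?_
      rw [← hrow i, mul_sum]
      exact sum_congr rfl fun j _ => by ring
    · rw [sum_comm]
      refine sum_congr rfl fun j _ => ?_
      rw [← hcol j, mul_sum]
      exact sum_congr rfl fun i _ => by ring
  have hlin : ∑ i, (u i - u' i) * p i = ∑ i, u i * p i - ∑ i, u' i * p i := by
    rw [← sum_sub_distrib]
    exact sum_congr rfl fun i _ => by ring
  have := sum_exp_mul_exp_sub_le K hK u u' v v'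
  unfold scalingObjective
  linarith

end Scaling

section Oscillation

variable {κ : Type*} [Fintype κ]

lemma exists_abs_sub_le_of_sub_le (g : κ → ℝ) (R : ℝ) (hg : ∀ j j', g j - g j' ≤ 2 * R) :
    ∃ c, ∀ j, |g j - c| ≤ R := by
  cases isEmpty_or_nonempty κ with
  | inl _ => exact ⟨0, isEmptyElim⟩
  | inr _ =>
    obtain ⟨jmax, -, hjmax⟩ := exists_mem_eq_sup' univ_nonempty g
    obtain ⟨jmin, -, hjmin⟩ := exists_mem_eq_inf' univ_nonempty g
    refine ⟨(g jmax + g jmin) / 2, fun j => abs_le.2 ⟨?_, ?_⟩⟩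
    · have := hjmin ▸ inf'_le g (mem_univ j)
      linarith [hg jmax jmin]
    · have := hjmax ▸ le_sup' g (mem_univ j)
      linarith [hg jmax jmin]

lemma sum_mul_le_of_sum_eq_zero (g x : κ → ℝ) (R : ℝ) (hg : ∀ j j', g j - g j' ≤ 2 * R)
    (hx : ∑ j, x j = 0) : ∑ j, g j * x j ≤ R * ∑ j, |x j| := by
  obtain ⟨c, hc⟩ := exists_abs_sub_le_of_sub_le g R hg
  have hshift : ∑ j, g j * x j = ∑ j, (g j - c) * x j := by
    simp only [sub_mul, sum_sub_distrib, ← mul_sum, hx, mul_zero, sub_zero]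
  rw [hshift, mul_sum]
  refine sum_le_sum fun j _ => ?_
  calc (g j - c) * x j ≤ |g j - c| * |x j| := by rw [← abs_mul]; exact le_abs_self _
    _ ≤ R * |x j| := mul_le_mul_of_nonneg_right (hc j) (abs_nonneg _)

end Oscillation

lemma sum_mul_sum_mul_sub_eq {ι κ : Type*} [Fintype ι] [Fintype κ] (w : ι → ℝ)
    (d q : ι → κ → ℝ) (c : κ → ℝ) (hd : ∀ j, ∑ l, w l * d l j = 0) :
    ∑ l, w l * ∑ j, d l j * (q l j - c j) = ∑ l, w l * ∑ j, d l j * q l j := by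
  have hc : ∑ l, w l * ∑ j, d l j * c j = 0 := by
    simp only [mul_sum]
    rw [sum_comm]
    refine sum_eq_zero fun j _ => ?_
    calc ∑ l, w l * (d l j * c j) = (∑ l, w l * d l j) * c j := by
          rw [sum_mul]; exact sum_congr rfl fun l _ => by ring
      _ = 0 := by rw [hd j, zero_mul]
  simp only [mul_sub, sum_sub_distrib, hc, sub_zero]

theorem stmt_17_general (m n : ℕ)
    (w : Fin m → ℝ) (hw : ∀ l, 0 ≤ w l) (hw1 : ∑ l, w l = 1)
    (p : Fin m → Fin n → ℝ)
    (K : Fin m → Matrix (Fin n) (Fin n) ℝ) (hK : ∀ l i j, 0 < K l i j)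
    (f : (Fin m → Fin n → ℝ) → (Fin m → Fin n → ℝ) → ℝ)
    (hf : ∀ u v, f u v = ∑ l, w l *
      ((∑ i, ∑ j, Real.exp (u l i) * K l i j * Real.exp (v l j)) -
        ∑ i, u l i * p l i))
    (u v ustar vstar : Fin m → Fin n → ℝ)
    (Rv : ℝ)
    (hrow : ∀ l i, ∑ j, Real.exp (u l i) * K l i j * Real.exp (v l j) = p l i)
    (q : Fin m → Fin n → ℝ)
    (hq : ∀ l j, q l j = ∑ i, Real.exp (u l i) * K l i j * Real.exp (v l j))
    (hq1 : ∀ l, ∑ j, q l j = 1)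
    (hvrange : ∀ l i i', v l i - v l i' ≤ Rv)
    (hvsrange : ∀ l i i', vstar l i - vstar l i' ≤ Rv)
    (hv0 : ∀ i, ∑ l, w l * v l i = 0)
    (hvs0 : ∀ i, ∑ l, w l * vstar l i = 0)
    (qbar : Fin n → ℝ) (hqbar : ∀ j, qbar j = ∑ l, w l * q l j) :
    f u v - f ustar vstar ≤ Rv * ∑ l, w l * ∑ j, |q l j - qbar j| := by
  have hdiff : ∀ j, ∑ l, w l * (v l j - vstar l j) = 0 := fun j => by
    simp only [mul_sub, sum_sub_distrib, hv0, hvs0, sub_zero]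
  have hqbar1 : ∑ j, qbar j = 1 := by
    simp only [hqbar, sum_comm (γ := Fin n), ← mul_sum, hq1, mul_one, hw1]
  calc f u v - f ustar vstar
      = ∑ l, w l * (scalingObjective (K l) (p l) (u l) (v l) -
          scalingObjective (K l) (p l) (ustar l) (vstar l)) := by
        simp only [hf, mul_sub, sum_sub_distrib, scalingObjective]
    _ ≤ ∑ l, w l * ∑ j, (v l j - vstar l j) * q l j :=
        sum_le_sum fun l _ => mul_le_mul_of_nonneg_left (scalingObjective_sub_le (K l)
          (fun i j => (hK l i j).le) (p l) (q l) _ _ _ _ (hrow l) fun j => (hq l j).symm) (hw l)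
    _ = ∑ l, w l * ∑ j, (v l j - vstar l j) * (q l j - qbar j) :=
        (sum_mul_sum_mul_sub_eq w _ q qbar hdiff).symm
    _ ≤ ∑ l, w l * (Rv * ∑ j, |q l j - qbar j|) :=
        sum_le_sum fun l _ => mul_le_mul_of_nonneg_left (sum_mul_le_of_sum_eq_zero _ _ Rv
          (fun j j' => by linarith [hvrange l j j', hvsrange l j' j])
          (by rw [sum_sub_distrib, hq1, hqbar1, sub_self])) (hw l)
    _ = Rv * ∑ l, w l * ∑ j, |q l j - qbar j| := by
        rw [mul_sum]
        exact sum_congr rfl fun l _ => by ring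

theorem stmt_17 (m n : ℕ)
    (w : Fin m → ℝ) (hw : ∀ l, 0 ≤ w l) (hw1 : ∑ l, w l = 1)
    (p : Fin m → Fin n → ℝ) (hp : ∀ l i, 0 ≤ p l i) (hp1 : ∀ l, ∑ i, p l i = 1)
    (K : Fin m → Matrix (Fin n) (Fin n) ℝ) (hK : ∀ l i j, 0 < K l i j)
    (f : (Fin m → Fin n → ℝ) → (Fin m → Fin n → ℝ) → ℝ)
    (hf : ∀ u v, f u v = ∑ l, w l *
      ((∑ i, ∑ j, Real.exp (u l i) * K l i j * Real.exp (v l j)) -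
        ∑ i, u l i * p l i))
    (u v ustar vstar : Fin m → Fin n → ℝ)
    (Rv : ℝ)
    (hrow : ∀ l i, ∑ j, Real.exp (u l i) * K l i j * Real.exp (v l j) = p l i)
    (q : Fin m → Fin n → ℝ)
    (hq : ∀ l j, q l j = ∑ i, Real.exp (u l i) * K l i j * Real.exp (v l j))
    (hq1 : ∀ l, ∑ j, q l j = 1)
    (hvrange : ∀ l i i', v l i - v l i' ≤ Rv)
    (hvsrange : ∀ l i i', vstar l i - vstar l i' ≤ Rv)
    (hv0 : ∀ i, ∑ l, w l * v l i = 0)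
    (hvs0 : ∀ i, ∑ l, w l * vstar l i = 0)
    (hmin : ∀ u' v' : Fin m → Fin n → ℝ,
      (∀ i, ∑ l, w l * v' l i = 0) → f ustar vstar ≤ f u' v')
    (qbar : Fin n → ℝ) (hqbar : ∀ j, qbar j = ∑ l, w l * q l j) :
    f u v - f ustar vstar ≤ Rv * ∑ l, w l * ∑ j, |q l j - qbar j| :=
  stmt_17_general m n w hw hw1 p K hK f hf u v ustar vstar Rv hrow q hq hq1 hvrange hvsrange hv0
    hvs0 qbar hqbar
end
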